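/- arXiv:2507.15016 — 3 statements merged into one kernel-verified Lean document; each statement's English description precedes it below -/
import Mathlib

section
/- Let δ ≥ 0, p ∈ (1,∞), and for a ≥ 0 define the shifted N-function φ_a by φ_a(0)=0 and φ_a'(t) = φ'(a+t)·t/(a+t), where φ'(t) = (δ+t)^(p-2) t. Then for every a ≥ 0, the function φ_a is convex and nondecreasing on [0,∞). -/
/-- The shifted N-function `φ_a(t) = ∫₀ᵗ φ'(a+s)·s/(a+s) ds`, where `φ'(t) = (δ+t)^(p-2) t`. -/
noncomputable def shiftedN (δ p a : ℝ) (t : ℝ) : ℝ :=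
  ∫ s in (0:ℝ)..t, (δ + (a + s)) ^ (p - 2) * (a + s) * (s / (a + s))

/-!
`φ_a` is the primitive of `s ↦ (δ + a + s)^(p-2) s`. Writing this as `(c + s)^(p-1) · s/(c + s)`
with `c = δ + a ≥ 0` exhibits it as a product of two nonnegative nondecreasing functions when
`p > 1`, and the primitive of a nonnegative nondecreasing function is convex and nondecreasing.
-/

open Set MeasureTheory intervalIntegral

section PrimitiveOfMonotone

variable {g : ℝ → ℝ} {s : Set ℝ} [s.OrdConnected] {x₀ x y : ℝ}

theorem MonotoneOn.intervalIntegrable_of_mem (hg : MonotoneOn g s) (hx : x ∈ s) (hy : y ∈ s) :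
    IntervalIntegrable g volume x y :=
  (hg.mono (Set.OrdConnected.uIcc_subset ‹_› hx hy)).intervalIntegrable

theorem MonotoneOn.convexOn_intervalIntegral (hg : MonotoneOn g s) (hx₀ : x₀ ∈ s) :
    ConvexOn ℝ s (fun t ↦ ∫ u in x₀..t, g u) := by
  have hint {x y : ℝ} (hx : x ∈ s) (hy : y ∈ s) := hg.intervalIntegrable_of_mem hx hy
  refine convexOn_of_slope_mono_adjacent (Set.OrdConnected.convex ‹_›) ?_
  intro x y z hx hz hxy hyz
  have hy : y ∈ s := Set.Icc_subset s hx hz ⟨hxy.le, hyz.le⟩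
  have hmono : ∀ u ∈ Icc x z, ∀ v ∈ Icc x z, u ≤ v → g u ≤ g v := fun u hu v hv ↦
    hg (Set.Icc_subset s hx hz hu) (Set.Icc_subset s hx hz hv)
  have hleft : ∫ u in x..y, g u ≤ (y - x) * g y := by
    simpa using integral_mono_on hxy.le (hint hx hy) intervalIntegrable_const fun u hu ↦
      hmono u (Icc_subset_Icc_right hyz.le hu) y ⟨hxy.le, hyz.le⟩ hu.2
  have hright : (z - y) * g y ≤ ∫ u in y..z, g u := by
    simpa using integral_mono_on hyz.le intervalIntegrable_const (hint hy hz) fun u hu ↦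
      hmono y ⟨hxy.le, hyz.le⟩ u (Icc_subset_Icc_left hxy.le hu) hu.1
  rw [integral_interval_sub_left (hint hx₀ hy) (hint hx₀ hx),
    integral_interval_sub_left (hint hx₀ hz) (hint hx₀ hy)]
  calc (∫ u in x..y, g u) / (y - x) ≤ g y := by rwa [div_le_iff₀ (sub_pos.2 hxy), mul_comm]
    _ ≤ (∫ u in y..z, g u) / (z - y) := by rwa [le_div_iff₀ (sub_pos.2 hyz), mul_comm]

theorem monotoneOn_intervalIntegral_of_nonneg
    (hint : ∀ x ∈ s, ∀ y ∈ s, IntervalIntegrable g volume x y) (hg : ∀ x ∈ s, 0 ≤ g x)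
    (hx₀ : x₀ ∈ s) : MonotoneOn (fun t ↦ ∫ u in x₀..t, g u) s := by
  intro x hx y hy hxy
  rw [← sub_nonneg, integral_interval_sub_left (hint x₀ hx₀ y hy) (hint x₀ hx₀ x hx)]
  exact intervalIntegral.integral_nonneg hxy fun u hu ↦ hg u (Set.Icc_subset s hx hy hu)

end PrimitiveOfMonotone

section ShiftedIntegrand

variable {c p : ℝ}

theorem monotoneOn_div_add_self (hc : 0 ≤ c) : MonotoneOn (fun s : ℝ ↦ s / (c + s)) (Ici 0) := by
  intro x (hx : 0 ≤ x) y (hy : 0 ≤ y) hxy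
  rcases hx.eq_or_lt with rfl | hx
  · simp only [zero_div]; positivity
  · rw [div_le_div_iff₀ (by positivity) (by linarith)]
    nlinarith

theorem add_rpow_sub_two_mul_eq (hc : 0 ≤ c) {s : ℝ} (hs : 0 ≤ s) :
    (c + s) ^ (p - 2) * s = (c + s) ^ (p - 1) * (s / (c + s)) := by
  rcases hs.eq_or_lt with rfl | hs
  · simp
  · have hcs : 0 < c + s := by positivity
    rw [show p - 1 = p - 2 + 1 by ring, Real.rpow_add_one hcs.ne']
    field_simp

theorem monotoneOn_add_rpow_sub_two_mul (hc : 0 ≤ c) (hp : 1 < p) :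
    MonotoneOn (fun s : ℝ ↦ (c + s) ^ (p - 2) * s) (Ici 0) := by
  have hrpow : MonotoneOn (fun s : ℝ ↦ (c + s) ^ (p - 1)) (Ici 0) := fun x (hx : 0 ≤ x) y _ hxy ↦
    Real.rpow_le_rpow (by positivity) (by linarith) (by linarith)
  refine (hrpow.mul (monotoneOn_div_add_self hc) (fun x (hx : 0 ≤ x) ↦ by positivity)
    fun x (hx : 0 ≤ x) ↦ by positivity).congr fun s hs ↦ ?_
  exact (add_rpow_sub_two_mul_eq hc hs).symm

end ShiftedIntegrand

/-- The integrands differ only at `s = -a`, where the factor `(a + s) * (s / (a + s))` is `0`. -/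
theorem shiftedN_eq_integral (δ p a t : ℝ) :
    shiftedN δ p a t = ∫ s in (0:ℝ)..t, (δ + a + s) ^ (p - 2) * s := by
  refine integral_congr_ae ?_
  filter_upwards [volume.ae_ne (-a)] with s hs _
  have has : a + s ≠ 0 := fun h ↦ hs (by linarith)
  rw [mul_assoc, mul_div_cancel₀ _ has, add_assoc]

/-- for `δ ≥ 0`, `p ∈ (1,∞)` and every shift `a ≥ 0`, the shifted N-function
`φ_a` is convex and nondecreasing on `[0,∞)`. -/
theorem shiftedN_convex_monotone (δ p : ℝ) (hδ : 0 ≤ δ) (hp : 1 < p) :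
    ∀ a : ℝ, 0 ≤ a →
      ConvexOn ℝ (Set.Ici (0:ℝ)) (shiftedN δ p a) ∧
      MonotoneOn (shiftedN δ p a) (Set.Ici (0:ℝ)) := by
  intro a ha
  have hg := monotoneOn_add_rpow_sub_two_mul (add_nonneg hδ ha) hp
  have hg_nonneg : ∀ s ∈ Ici (0:ℝ), 0 ≤ (δ + a + s) ^ (p - 2) * s := fun s (hs : 0 ≤ s) ↦ by
    positivity
  rw [show shiftedN δ p a = _ from funext (shiftedN_eq_integral δ p a)]
  exact ⟨hg.convexOn_intervalIntegral self_mem_Ici,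
    monotoneOn_intervalIntegral_of_nonneg (fun _ hx _ hy ↦ hg.intervalIntegrable_of_mem hx hy)
      hg_nonneg self_mem_Ici⟩
end

section
/- Let δ ≥ 0 and p ∈ (1,∞), and for a ≥ 0 let φ_a be the shifted N-function with φ_a'(t) = (δ + a + t)^(p-2)·(a+t)·t/(a+t) (i.e. φ_a'(t) = φ'(a+t) t/(a+t) where φ'(s) = (δ+s)^(p-2)s), and let (φ_a)* be its Fenchel conjugate, (φ_a)*(s) = sup_{t≥0} (st - φ_a(t)). Then for every ε > 0 there exists c_ε ≥ 1, depending only on ε, p, and δ, such that for all t, s, a ≥ 0: s·t ≤ c_ε·(φ_a)*(s) + ε·φ_a(t). -/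
/-- The Fenchel conjugate of a function `f : ℝ → ℝ` over `t ≥ 0`:
`f*(s) = sup_{t ≥ 0} (s·t - f(t))`. -/
noncomputable def fenchel (f : ℝ → ℝ) (s : ℝ) : ℝ :=
  sSup {x : ℝ | ∃ t : ℝ, 0 ≤ t ∧ x = s * t - f t}

/-!
For `t ≥ 0`, `φ_a(t) = ∫₀ᵗ (κ + s)^(p-2) s ds` with `κ = δ + a`, and this integrand obeys
`φ_a'(θ x) ≤ θ^(q-1) φ_a'(x)` for `θ ∈ (0, 1]`, with `q = min 2 p > 1` independent of `κ`.
Hence `φ_a(θ t) ≤ θ^q φ_a(t)` uniformly in `a`, and Young's inequality at the point `θ t`,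
`s (θ t) ≤ φ_a*(s) + φ_a(θ t)`, gives `s t ≤ θ⁻¹ φ_a*(s) + θ^(q-1) φ_a(t)`; it remains to choose
`θ^(q-1) ≤ ε`. The same scaling makes `φ_a'` grow like `x^(q-1)`, so the supremum defining
`φ_a*(s)` is finite (for an unbounded set `sSup` would return the junk value `0`).
-/

open Real MeasureTheory Set Filter

lemma exists_pos_le_one_rpow_le {r ε : ℝ} (hr : 0 < r) (hε : 0 < ε) :
    ∃ θ : ℝ, 0 < θ ∧ θ ≤ 1 ∧ θ ^ r ≤ ε := by
  refine ⟨min 1 (ε ^ r⁻¹), lt_min one_pos (rpow_pos_of_pos hε _), min_le_left _ _, ?_⟩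
  calc min 1 (ε ^ r⁻¹) ^ r ≤ (ε ^ r⁻¹) ^ r :=
        rpow_le_rpow (le_min zero_le_one (rpow_nonneg hε.le _)) (min_le_right _ _) hr.le
    _ = ε := rpow_inv_rpow hε.le hr.ne'

lemma mul_le_inv_mul_fenchel_add {f : ℝ → ℝ} {s t θ q : ℝ}
    (hbdd : BddAbove {x : ℝ | ∃ u : ℝ, 0 ≤ u ∧ x = s * u - f u}) (ht : 0 ≤ t) (hθ : 0 < θ)
    (hscale : f (θ * t) ≤ θ ^ q * f t) :
    s * t ≤ θ⁻¹ * fenchel f s + θ ^ (q - 1) * f t := by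
  have hyoung : s * (θ * t) - f (θ * t) ≤ fenchel f s :=
    le_csSup hbdd ⟨θ * t, mul_nonneg hθ.le ht, rfl⟩
  calc s * t = θ⁻¹ * (s * (θ * t)) := by field_simp
    _ ≤ θ⁻¹ * (fenchel f s + θ ^ q * f t) := by gcongr; linarith
    _ = θ⁻¹ * fenchel f s + θ ^ (q - 1) * f t := by rw [rpow_sub_one hθ.ne']; ring

section Primitive

variable {g : ℝ → ℝ}

lemma tendsto_atTop_of_rpow_scaling {r : ℝ} (hr : 0 < r) (hg1 : 0 < g 1)
    (hscale : ∀ θ x : ℝ, 0 < θ → θ ≤ 1 → 0 ≤ x → g (θ * x) ≤ θ ^ r * g x) :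
    Tendsto g atTop atTop := by
  refine tendsto_atTop_mono' _ ?_ ((tendsto_rpow_atTop hr).const_mul_atTop hg1)
  filter_upwards [eventually_ge_atTop 1] with x hx
  have hx0 : 0 < x := one_pos.trans_le hx
  have h := hscale x⁻¹ x (inv_pos.2 hx0) (inv_le_one_of_one_le₀ hx) hx0.le
  rw [inv_mul_cancel₀ hx0.ne', inv_rpow hx0.le, inv_mul_eq_div,
    le_div_iff₀ (rpow_pos_of_pos hx0 r)] at h
  exact h

lemma integral_comp_mul_le (hg : ContinuousOn g (Ici 0)) {θ C t : ℝ} (hθ : 0 ≤ θ) (ht : 0 ≤ t)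
    (hle : ∀ x ∈ Icc 0 t, g (θ * x) ≤ C * g x) :
    ∫ x in (0 : ℝ)..θ * t, g x ≤ θ * C * ∫ x in (0 : ℝ)..t, g x := by
  have hgt : ContinuousOn g (uIcc 0 t) :=
    hg.mono (by rw [uIcc_of_le ht]; exact Icc_subset_Ici_self)
  have hgθ : ContinuousOn (fun x => g (θ * x)) (uIcc 0 t) :=
    hg.comp (continuousOn_const.mul continuousOn_id) fun x hx => by
      rw [uIcc_of_le ht] at hx
      exact mul_nonneg hθ hx.1
  have hsub := intervalIntegral.smul_integral_comp_mul_left (a := 0) (b := t) g θ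
  rw [mul_zero] at hsub
  rw [← hsub, smul_eq_mul, mul_assoc, ← intervalIntegral.integral_const_mul C]
  refine mul_le_mul_of_nonneg_left (intervalIntegral.integral_mono_on ht ?_ ?_ hle) hθ
  · exact hgθ.intervalIntegrable
  · exact hgt.intervalIntegrable.const_mul C

lemma mul_sub_integral_le (hg : ContinuousOn g (Ici 0)) (hg0 : ∀ x, 0 ≤ x → 0 ≤ g x)
    {s R t : ℝ} (hs : 0 ≤ s) (hR : 0 ≤ R) (hsR : ∀ x, R ≤ x → s ≤ g x) (ht : 0 ≤ t) :
    s * t - ∫ x in (0 : ℝ)..t, g x ≤ s * R := by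
  have hint : ∀ a b : ℝ, 0 ≤ a → 0 ≤ b → IntervalIntegrable g volume a b :=
    fun a b ha hb => (hg.mono fun x hx => (le_min ha hb).trans hx.1).intervalIntegrable
  rcases le_total t R with htR | hRt
  · have h0t : 0 ≤ ∫ x in (0 : ℝ)..t, g x :=
      intervalIntegral.integral_nonneg ht fun x hx => hg0 x hx.1
    nlinarith [mul_le_mul_of_nonneg_left htR hs]
  · rw [← intervalIntegral.integral_add_adjacent_intervals (hint 0 R le_rfl hR)
      (hint R t hR ht)]
    have h0R : 0 ≤ ∫ x in (0 : ℝ)..R, g x :=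
      intervalIntegral.integral_nonneg hR fun x hx => hg0 x hx.1
    have hRt' : ∫ _ in R..t, s ≤ ∫ x in R..t, g x :=
      intervalIntegral.integral_mono_on hRt intervalIntegrable_const (hint R t hR ht)
        fun x hx => hsR x hx.1
    rw [intervalIntegral.integral_const, smul_eq_mul] at hRt'
    nlinarith

lemma bddAbove_mul_sub_integral (hg : ContinuousOn g (Ici 0)) (hg0 : ∀ x, 0 ≤ x → 0 ≤ g x)
    (htop : Tendsto g atTop atTop) {s : ℝ} (hs : 0 ≤ s) :
    BddAbove {x : ℝ | ∃ t : ℝ, 0 ≤ t ∧ x = s * t - ∫ u in (0 : ℝ)..t, g u} := by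
  obtain ⟨R, hR⟩ := eventually_atTop.1 (htop.eventually_ge_atTop s)
  refine ⟨s * max R 0, ?_⟩
  rintro _ ⟨t, ht, rfl⟩
  exact mul_sub_integral_le hg hg0 hs (le_max_right _ _)
    (fun x hx => hR x (le_of_max_le_left hx)) ht

end Primitive

section ShiftedDeriv

noncomputable def shiftedDeriv (κ p t : ℝ) : ℝ := (κ + t) ^ (p - 2) * t

variable {κ p : ℝ}

lemma shiftedDeriv_nonneg (hκ : 0 ≤ κ) {t : ℝ} (ht : 0 ≤ t) : 0 ≤ shiftedDeriv κ p t :=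
  mul_nonneg (rpow_nonneg (by linarith) _) ht

lemma continuousOn_shiftedDeriv (hκ : 0 ≤ κ) (hp : 1 < p) :
    ContinuousOn (shiftedDeriv κ p) (Ici 0) := by
  rcases hκ.lt_or_eq with hκ | rfl
  · refine ContinuousOn.mul ?_ continuousOn_id
    exact (continuousOn_const.add continuousOn_id).rpow_const fun x hx =>
      Or.inl (show κ + x ≠ 0 by linarith [mem_Ici.mp hx])
  · -- for `κ = 0` and `p < 2` the factor `t ^ (p - 2)` blows up at `0`; rewrite as `t ^ (p - 1)`
    refine (continuousOn_id.rpow_const fun _ _ => Or.inr (by linarith : 0 ≤ p - 1)).congr ?_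
    intro t ht
    simp only [shiftedDeriv, zero_add, id]
    rcases (mem_Ici.mp ht).lt_or_eq with ht0 | rfl
    · rw [← rpow_add_one ht0.ne']; ring_nf
    · rw [zero_rpow (by linarith : p - 1 ≠ 0), mul_zero]

lemma shiftedDeriv_mul_le (hκ : 0 ≤ κ) {θ x : ℝ} (hθ0 : 0 < θ) (hθ1 : θ ≤ 1)
    (hx : 0 ≤ x) : shiftedDeriv κ p (θ * x) ≤ θ ^ (min 2 p - 1) * shiftedDeriv κ p x := by
  unfold shiftedDeriv
  rcases le_or_gt 2 p with h2 | h2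
  · rw [min_eq_left h2, show (2 : ℝ) - 1 = 1 by norm_num, rpow_one]
    have hb : (κ + θ * x) ^ (p - 2) ≤ (κ + x) ^ (p - 2) :=
      rpow_le_rpow (by positivity) (by nlinarith) (by linarith)
    calc (κ + θ * x) ^ (p - 2) * (θ * x) ≤ (κ + x) ^ (p - 2) * (θ * x) := by gcongr
      _ = θ * ((κ + x) ^ (p - 2) * x) := by ring
  · rw [min_eq_right h2.le]
    rcases hx.lt_or_eq with hx0 | rfl
    · -- `θ (κ + x) ≤ κ + θ x` and the exponent `p - 2` is negative
      have hb : (κ + θ * x) ^ (p - 2) ≤ (θ * (κ + x)) ^ (p - 2) :=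
        rpow_le_rpow_of_nonpos (by positivity) (by nlinarith) (by linarith)
      calc (κ + θ * x) ^ (p - 2) * (θ * x) ≤ (θ * (κ + x)) ^ (p - 2) * (θ * x) := by gcongr
        _ = (θ ^ (p - 2) * θ) * ((κ + x) ^ (p - 2) * x) := by
            rw [mul_rpow hθ0.le (by linarith)]; ring
        _ = θ ^ (p - 1) * ((κ + x) ^ (p - 2) * x) := by
            rw [← rpow_add_one hθ0.ne']; ring_nf
    · simp

lemma tendsto_shiftedDeriv_atTop (hκ : 0 ≤ κ) (hp : 1 < p) :
    Tendsto (shiftedDeriv κ p) atTop atTop := by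
  refine tendsto_atTop_of_rpow_scaling (r := min 2 p - 1) ?_ ?_
    fun θ x hθ0 hθ1 hx => shiftedDeriv_mul_le hκ hθ0 hθ1 hx
  · linarith [lt_min one_lt_two hp]
  · simpa [shiftedDeriv] using rpow_pos_of_pos (by linarith : 0 < κ + 1) (p - 2)

end ShiftedDeriv

section ShiftedN

variable {δ p a : ℝ}

lemma shiftedN_eq_integral_shiftedDeriv (ha : 0 ≤ a) {t : ℝ} (ht : 0 ≤ t) :
    shiftedN δ p a t = ∫ s in (0 : ℝ)..t, shiftedDeriv (δ + a) p s := by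
  refine intervalIntegral.integral_congr fun s hs => ?_
  rw [uIcc_of_le ht] at hs
  simp only [shiftedDeriv, ← add_assoc]
  rcases (by linarith [hs.1] : (0 : ℝ) ≤ a + s).lt_or_eq with h | h
  · rw [mul_assoc, mul_div_cancel₀ _ h.ne']
  · obtain ⟨rfl, rfl⟩ : a = 0 ∧ s = 0 := by constructor <;> linarith [hs.1]
    simp

lemma shiftedN_nonneg (hδ : 0 ≤ δ) (ha : 0 ≤ a) {t : ℝ} (ht : 0 ≤ t) :
    0 ≤ shiftedN δ p a t := by
  rw [shiftedN_eq_integral_shiftedDeriv ha ht]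
  exact intervalIntegral.integral_nonneg ht fun s hs =>
    shiftedDeriv_nonneg (by linarith) hs.1

lemma shiftedN_mul_le (hδ : 0 ≤ δ) (hp : 1 < p) (ha : 0 ≤ a) {θ t : ℝ} (hθ0 : 0 < θ)
    (hθ1 : θ ≤ 1) (ht : 0 ≤ t) : shiftedN δ p a (θ * t) ≤ θ ^ min 2 p * shiftedN δ p a t := by
  have hκ : 0 ≤ δ + a := by linarith
  rw [shiftedN_eq_integral_shiftedDeriv ha (mul_nonneg hθ0.le ht),
    shiftedN_eq_integral_shiftedDeriv ha ht]
  calc ∫ s in (0 : ℝ)..θ * t, shiftedDeriv (δ + a) p s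
      ≤ θ * θ ^ (min 2 p - 1) * ∫ s in (0 : ℝ)..t, shiftedDeriv (δ + a) p s :=
        integral_comp_mul_le (continuousOn_shiftedDeriv hκ hp) hθ0.le ht
          fun x hx => shiftedDeriv_mul_le hκ hθ0 hθ1 hx.1
    _ = θ ^ min 2 p * ∫ s in (0 : ℝ)..t, shiftedDeriv (δ + a) p s := by
        rw [rpow_sub_one hθ0.ne', mul_div_cancel₀ _ hθ0.ne']

lemma bddAbove_mul_sub_shiftedN (hδ : 0 ≤ δ) (hp : 1 < p) (ha : 0 ≤ a) {s : ℝ}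
    (hs : 0 ≤ s) :
    BddAbove {x : ℝ | ∃ u : ℝ, 0 ≤ u ∧ x = s * u - shiftedN δ p a u} := by
  have hκ : 0 ≤ δ + a := by linarith
  refine (bddAbove_mul_sub_integral (continuousOn_shiftedDeriv hκ hp)
    (fun x hx => shiftedDeriv_nonneg hκ hx) (tendsto_shiftedDeriv_atTop hκ hp) hs).mono ?_
  rintro _ ⟨u, hu, rfl⟩
  exact ⟨u, hu, by rw [shiftedN_eq_integral_shiftedDeriv ha hu]⟩

end ShiftedN

/-- ε-Young inequality for the family of shifted N-functions: for every `ε > 0`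
there is `c_ε ≥ 1` (depending on `ε`, `p`, `δ`) such that
`s·t ≤ c_ε·(φ_a)*(s) + ε·φ_a(t)` for all `t, s, a ≥ 0`. -/
theorem epsilon_young (δ p : ℝ) (hδ : 0 ≤ δ) (hp : 1 < p) :
    ∀ ε : ℝ, 0 < ε → ∃ c : ℝ, 1 ≤ c ∧
      ∀ t s a : ℝ, 0 ≤ t → 0 ≤ s → 0 ≤ a →
        s * t ≤ c * fenchel (shiftedN δ p a) s + ε * shiftedN δ p a t := by
  intro ε hε
  obtain ⟨θ, hθ0, hθ1, hθε⟩ :=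
    exists_pos_le_one_rpow_le (by linarith [lt_min one_lt_two hp] : 0 < min 2 p - 1) hε
  refine ⟨θ⁻¹, (one_le_inv₀ hθ0).2 hθ1, fun t s a ht hs ha => ?_⟩
  calc s * t ≤ θ⁻¹ * fenchel (shiftedN δ p a) s + θ ^ (min 2 p - 1) * shiftedN δ p a t :=
        mul_le_inv_mul_fenchel_add (bddAbove_mul_sub_shiftedN hδ hp ha hs) ht hθ0
          (shiftedN_mul_le hδ hp ha hθ0 hθ1 ht)
    _ ≤ θ⁻¹ * fenchel (shiftedN δ p a) s + ε * shiftedN δ p a t := by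
        gcongr
        exact shiftedN_nonneg hδ ha ht
end

section
/- Let δ ≥ 0 and p ∈ (1,∞), let φ_a denote the shifted N-function with φ_a'(t) = (δ + a + t)^(p-2) · t (i.e. φ_a'(t) = φ'(a+t)·t/(a+t)) and (φ_a)* its Fenchel conjugate. Then there is a constant c depending only on p and δ such that for all a, r ≥ 0 and all h ∈ (0,1]: (φ_a)*(h·r) ≤ c · h^(min{2, p'}) · (φ_a)*(r). -/
open Real MeasureTheory Set intervalIntegral

-- integrability of the simplified integrand
lemma myInt (b p : ℝ) (hb : 0 ≤ b) (hp : 1 < p) (u : ℝ) (hu : 0 ≤ u) :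
    IntervalIntegrable (fun s => (b + s) ^ (p - 2) * s) volume 0 u := by
  rcases eq_or_lt_of_le hb with hb0 | hb0
  · -- b = 0
    subst hb0
    have hcont : ContinuousOn (fun s : ℝ => s ^ (p - 1)) (Set.uIcc 0 u) :=
      continuousOn_id.rpow_const (fun x _ => Or.inr (by linarith))
    have h1 : IntervalIntegrable (fun s : ℝ => s ^ (p - 1)) volume 0 u :=
      hcont.intervalIntegrable
    rw [intervalIntegrable_iff_integrableOn_Ioc_of_le hu] at h1 ⊢
    refine h1.congr_fun (fun s hs => ?_) measurableSet_Ioc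
    have hs0 : (0:ℝ) < s := hs.1
    rw [zero_add, ← Real.rpow_add_one hs0.ne']
    ring_nf
  · -- 0 < b
    apply ContinuousOn.intervalIntegrable
    apply ContinuousOn.mul _ continuousOn_id
    apply ContinuousOn.rpow_const (continuousOn_const.add continuousOn_id)
    intro x hx
    rw [Set.uIcc_of_le hu] at hx
    exact Or.inl (by have := hx.1; exact ne_of_gt (by simp only [Pi.add_apply, id]; linarith))

lemma myNonneg (b p u : ℝ) (hb : 0 ≤ b) (hu : 0 ≤ u) :
    0 ≤ ∫ s in (0:ℝ)..u, (b + s) ^ (p - 2) * s :=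
  intervalIntegral.integral_nonneg hu
    (fun s hs => mul_nonneg (Real.rpow_nonneg (by linarith [hs.1]) _) hs.1)

lemma shiftedN_eq (δ p a t : ℝ) (hδ : 0 ≤ δ) (ha : 0 ≤ a) (ht : 0 ≤ t) :
    shiftedN δ p a t = ∫ s in (0:ℝ)..t, ((δ + a) + s) ^ (p - 2) * s := by
  unfold shiftedN
  apply intervalIntegral.integral_congr
  intro s hs
  rw [Set.uIcc_of_le ht] at hs
  have hs0 : 0 ≤ s := hs.1
  simp only []
  rcases eq_or_lt_of_le (by linarith : (0:ℝ) ≤ a + s) with h0 | h0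
  · have hs' : s = 0 := by linarith
    simp [← h0, hs']
  · rw [mul_assoc, mul_div_cancel₀ _ h0.ne']
    ring_nf

lemma key_scaling (b p μ u : ℝ) (hb : 0 ≤ b) (hp : 1 < p) (hμ0 : 0 < μ) (hμ1 : μ ≤ 1)
    (hu : 0 ≤ u) :
    μ ^ (max 2 p) * ∫ σ in (0:ℝ)..u, (b + σ) ^ (p - 2) * σ ≤
      ∫ s in (0:ℝ)..(μ * u), (b + s) ^ (p - 2) * s := by
  set G : ℝ → ℝ := fun s => (b + s) ^ (p - 2) * s with hG
  have hchange : ∫ s in (0:ℝ)..(μ * u), G s = μ * ∫ σ in (0:ℝ)..u, G (μ * σ) := by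
    rw [intervalIntegral.integral_comp_mul_left G hμ0.ne']
    rw [mul_zero, smul_eq_mul, ← mul_assoc, mul_inv_cancel₀ hμ0.ne', one_mul]
  rw [hchange]
  have hq : μ ^ (max 2 p) = μ * μ ^ (max 2 p - 1) := by
    rw [mul_comm, ← Real.rpow_add_one hμ0.ne' (max 2 p - 1)]
    congr 1; ring
  rw [hq, mul_assoc]
  apply mul_le_mul_of_nonneg_left _ hμ0.le
  rw [← intervalIntegral.integral_const_mul]
  have hint1 : IntervalIntegrable (fun σ => μ ^ (max 2 p - 1) * G σ) volume 0 u :=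
    (myInt b p hb hp u hu).const_mul _
  have hint2 : IntervalIntegrable (fun σ => G (μ * σ)) volume 0 u := by
    have := (myInt b p hb hp (μ * u) (by positivity)).comp_mul_left (c := μ)
    rwa [zero_div, mul_div_cancel_left₀ _ hμ0.ne'] at this
  apply intervalIntegral.integral_mono_on hu hint1 hint2
  intro σ hσ
  have hσ0 : 0 ≤ σ := hσ.1
  rcases eq_or_lt_of_le hσ0 with h0 | h0
  · simp [hG, ← h0]
  -- σ > 0
  have key : μ ^ (max 2 p - 2) * (b + σ) ^ (p - 2) ≤ (b + μ * σ) ^ (p - 2) := by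
    rcases le_or_gt 2 p with h2p | h2p
    · rw [max_eq_right h2p]
      rw [← Real.mul_rpow hμ0.le (by linarith)]
      exact Real.rpow_le_rpow (by positivity) (by nlinarith) (by linarith)
    · rw [max_eq_left h2p.le, sub_self, Real.rpow_zero, one_mul]
      exact Real.rpow_le_rpow_of_nonpos (by positivity) (by nlinarith) (by linarith)
  have hμσ : (0:ℝ) ≤ μ * σ := by positivity
  calc μ ^ (max 2 p - 1) * G σ
      = (μ ^ (max 2 p - 2) * (b + σ) ^ (p - 2)) * (μ * σ) := by
        rw [hG]
        have : μ ^ (max 2 p - 1) = μ ^ (max 2 p - 2) * μ := by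
          rw [← Real.rpow_add_one hμ0.ne' (max 2 p - 2)]
          congr 1; ring
        rw [this]; ring
    _ ≤ (b + μ * σ) ^ (p - 2) * (μ * σ) := mul_le_mul_of_nonneg_right key hμσ

lemma lower_bound (b p t : ℝ) (hb : 0 ≤ b) (hp : 1 < p) (hbt : b ≤ t) (ht : 0 ≤ t) :
    min (1 / p) (2 ^ (p - 3) : ℝ) * t ^ p ≤ ∫ s in (0:ℝ)..t, (b + s) ^ (p - 2) * s := by
  rcases eq_or_lt_of_le ht with ht0 | ht0
  · simp [← ht0, Real.zero_rpow (by positivity : p ≠ 0)]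
  have htp : (0:ℝ) ≤ t ^ p := Real.rpow_nonneg ht0.le p
  rcases le_or_gt 2 p with h2p | h2p
  · -- p ≥ 2 : integrand ≥ s^(p-1), integral = t^p/p
    have hcont : ContinuousOn (fun s : ℝ => s ^ (p - 1)) (Set.uIcc 0 t) :=
      continuousOn_id.rpow_const (fun x _ => Or.inr (by linarith))
    have hint : IntervalIntegrable (fun s : ℝ => s ^ (p - 1)) volume 0 t :=
      hcont.intervalIntegrable
    have hmono : ∫ s in (0:ℝ)..t, s ^ (p - 1) ≤ ∫ s in (0:ℝ)..t, (b + s) ^ (p - 2) * s := by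
      apply intervalIntegral.integral_mono_on ht hint (myInt b p hb hp t ht)
      intro s hs
      have hs0 : 0 ≤ s := hs.1
      rcases eq_or_lt_of_le hs0 with h0 | h0
      · simp [← h0, Real.zero_rpow (by intro h; linarith [h] : p - 1 ≠ 0)]
      · have hsplit : s ^ (p - 1) = s ^ (p - 2) * s := by
          rw [← Real.rpow_add_one h0.ne' (p - 2)]; congr 1; ring
        rw [hsplit]
        exact mul_le_mul_of_nonneg_right
          (Real.rpow_le_rpow hs0 (by linarith) (by linarith)) hs0
    have hval : ∫ s in (0:ℝ)..t, s ^ (p - 1) = t ^ p / p := by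
      rw [integral_rpow (Or.inl (by linarith))]
      rw [Real.zero_rpow (by intro h; nlinarith [h] : p - 1 + 1 ≠ 0)]
      have : p - 1 + 1 = p := by ring
      rw [this, sub_zero]
    calc min (1 / p) (2 ^ (p - 3) : ℝ) * t ^ p ≤ (1 / p) * t ^ p := by
          apply mul_le_mul_of_nonneg_right (min_le_left _ _) htp
      _ = t ^ p / p := by ring
      _ = ∫ s in (0:ℝ)..t, s ^ (p - 1) := hval.symm
      _ ≤ _ := hmono
  · -- p < 2 : integrand ≥ (b+t)^(p-2) * s
    have hbt0 : 0 < b + t := by linarith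
    have hint : IntervalIntegrable (fun s : ℝ => (b + t) ^ (p - 2) * s) volume 0 t :=
      (intervalIntegrable_id).const_mul _
    have hmono : ∫ s in (0:ℝ)..t, (b + t) ^ (p - 2) * s ≤
        ∫ s in (0:ℝ)..t, (b + s) ^ (p - 2) * s := by
      apply intervalIntegral.integral_mono_on ht hint (myInt b p hb hp t ht)
      intro s hs
      have hs0 : 0 ≤ s := hs.1
      rcases eq_or_lt_of_le hs0 with h0 | h0
      · simp [← h0]
      · exact mul_le_mul_of_nonneg_right
          (Real.rpow_le_rpow_of_nonpos (by linarith) (by linarith [hs.2]) (by linarith)) hs0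
    have hval : ∫ s in (0:ℝ)..t, (b + t) ^ (p - 2) * s = (b + t) ^ (p - 2) * (t ^ 2 / 2) := by
      rw [intervalIntegral.integral_const_mul, integral_id]
      norm_num
    have h2t : (b + t) ^ (p - 2) ≥ 2 ^ (p - 2) * t ^ (p - 2) := by
      rw [← Real.mul_rpow (by norm_num) ht0.le]
      exact Real.rpow_le_rpow_of_nonpos hbt0 (by linarith) (by linarith)
    have hfin : 2 ^ (p - 3) * t ^ p ≤ (b + t) ^ (p - 2) * (t ^ 2 / 2) := by
      have ht2 : (0:ℝ) ≤ t ^ 2 / 2 := by positivity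
      calc 2 ^ (p - 3) * t ^ p = (2 ^ (p - 2) * t ^ (p - 2)) * (t ^ 2 / 2) := by
            have h1 : (2:ℝ) ^ (p - 3) = 2 ^ (p - 2) / 2 := by
              rw [← Real.rpow_sub_one (by norm_num : (2:ℝ) ≠ 0)]; ring_nf
            have h2 : t ^ p = t ^ (p - 2) * t ^ 2 := by
              rw [← Real.rpow_natCast t 2, ← Real.rpow_add ht0]; ring_nf
            rw [h1, h2]; ring
        _ ≤ (b + t) ^ (p - 2) * (t ^ 2 / 2) := mul_le_mul_of_nonneg_right h2t ht2
    calc min (1 / p) (2 ^ (p - 3) : ℝ) * t ^ p ≤ 2 ^ (p - 3) * t ^ p :=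
          mul_le_mul_of_nonneg_right (min_le_right _ _) htp
      _ ≤ (b + t) ^ (p - 2) * (t ^ 2 / 2) := hfin
      _ = ∫ s in (0:ℝ)..t, (b + t) ^ (p - 2) * s := hval.symm
      _ ≤ _ := hmono

lemma myBdd (δ p a r : ℝ) (hδ : 0 ≤ δ) (hp : 1 < p) (ha : 0 ≤ a) (hr : 0 ≤ r) :
    BddAbove {x : ℝ | ∃ t : ℝ, 0 ≤ t ∧ x = r * t - shiftedN δ p a t} := by
  have hb : (0:ℝ) ≤ δ + a := by linarith
  set κ := min (1 / p) ((2:ℝ) ^ (p - 3)) with hκdef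
  have hκ : 0 < κ := lt_min (by positivity) (Real.rpow_pos_of_pos two_pos _)
  set T := max (δ + a) ((r / κ) ^ (1 / (p - 1))) with hTdef
  have hT0 : 0 ≤ T := le_trans hb (le_max_left _ _)
  refine ⟨r * T, ?_⟩
  rintro x ⟨t, ht, rfl⟩
  rw [shiftedN_eq δ p a t hδ ha ht]
  have hfn : 0 ≤ ∫ s in (0:ℝ)..t, ((δ + a) + s) ^ (p - 2) * s := myNonneg _ p t hb ht
  rcases le_total t T with hle | hge
  · have : r * t ≤ r * T := mul_le_mul_of_nonneg_left hle hr
    linarith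
  · have hbt : δ + a ≤ t := le_trans (le_max_left _ _) hge
    have hlow := lower_bound (δ + a) p t hb hp hbt ht
    have htp : r * t ≤ κ * t ^ p := by
      rcases eq_or_lt_of_le ht with h0 | h0
      · rw [← h0, Real.zero_rpow (by positivity : p ≠ 0)]; simp
      · have h1 : (r / κ) ^ (1 / (p - 1)) ≤ t := le_trans (le_max_right _ _) hge
        have h2 : ((r / κ) ^ (1 / (p - 1))) ^ (p - 1) ≤ t ^ (p - 1) :=
          Real.rpow_le_rpow (Real.rpow_nonneg (by positivity) _) h1 (by linarith)
        have h3 : ((r / κ) ^ (1 / (p - 1))) ^ (p - 1) = r / κ := by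
          rw [← Real.rpow_mul (by positivity : (0:ℝ) ≤ r / κ), one_div,
            inv_mul_cancel₀ (by linarith : (0:ℝ) < p - 1).ne',
            Real.rpow_one]
        have h4 : r / κ ≤ t ^ (p - 1) := h3 ▸ h2
        have h5 : t ^ p = t ^ (p - 1) * t := by
          rw [← Real.rpow_add_one h0.ne' (p - 1)]; congr 1; ring
        rw [h5]
        calc r * t = (r / κ) * t * κ := by field_simp
          _ ≤ t ^ (p - 1) * t * κ :=
              mul_le_mul_of_nonneg_right (mul_le_mul_of_nonneg_right h4 h0.le) hκ.le
          _ = κ * (t ^ (p - 1) * t) := by ring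
    have hrT : 0 ≤ r * T := mul_nonneg hr hT0
    linarith

/-- scaling estimate for the Fenchel conjugates of shifted N-functions:
`(φ_a)*(h·r) ≤ c · h^(min{2,p'}) · (φ_a)*(r)` for all `a, r ≥ 0` and `h ∈ (0,1]`,
with `c` depending only on `p` and `δ`. -/
theorem fenchel_scaling (δ p p' : ℝ) (hδ : 0 ≤ δ) (hp : 1 < p)
    (hp' : p' = p / (p - 1)) :
    ∃ c : ℝ, 0 < c ∧
      ∀ a r h : ℝ, 0 ≤ a → 0 ≤ r → 0 < h → h ≤ 1 →
        fenchel (shiftedN δ p a) (h * r) ≤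
          c * h ^ (min 2 p') * fenchel (shiftedN δ p a) r := by
  refine ⟨1, one_pos, ?_⟩
  intro a r h ha hr hh0 hh1
  have hb : (0:ℝ) ≤ δ + a := by linarith
  have hp1 : (0:ℝ) < p - 1 := by linarith
  set m := min 2 p' with hmdef
  set q := max 2 p with hqdef
  have hm1 : 1 < m := by
    rw [hmdef]
    apply lt_min one_lt_two
    rw [hp', lt_div_iff₀ hp1]; linarith
  have hmq : (m - 1) * q = m := by
    rcases le_or_gt 2 p with h2 | h2
    · have hq : q = p := max_eq_right h2
      have hmv : m = p' := min_eq_right (by rw [hp', div_le_iff₀ hp1]; linarith)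
      rw [hq, hmv, hp']; field_simp; ring
    · have hq : q = 2 := max_eq_left h2.le
      have hmv : m = 2 := min_eq_left (by rw [hp', le_div_iff₀ hp1]; linarith)
      rw [hq, hmv]; ring
  set μ := h ^ (m - 1) with hμdef
  have hμ0 : 0 < μ := Real.rpow_pos_of_pos hh0 _
  have hμ1 : μ ≤ 1 := Real.rpow_le_one hh0.le hh1 (by linarith)
  have hμq : μ ^ q = h ^ m := by
    rw [hμdef, ← Real.rpow_mul hh0.le, hmq]
  have hS : BddAbove {x : ℝ | ∃ t : ℝ, 0 ≤ t ∧ x = r * t - shiftedN δ p a t} :=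
    myBdd δ p a r hδ hp ha hr
  have hzero : (0:ℝ) ∈ {x : ℝ | ∃ t : ℝ, 0 ≤ t ∧ x = r * t - shiftedN δ p a t} :=
    ⟨0, le_refl 0, by simp [shiftedN]⟩
  have hF0 : 0 ≤ sSup {x : ℝ | ∃ t : ℝ, 0 ≤ t ∧ x = r * t - shiftedN δ p a t} :=
    le_csSup hS hzero
  have hhm : 0 < h ^ m := Real.rpow_pos_of_pos hh0 m
  rw [one_mul]
  simp only [fenchel]
  apply Real.sSup_le _ (mul_nonneg hhm.le hF0)
  rintro x ⟨t, ht, rfl⟩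
  set u := t / μ with hudef
  have hu : 0 ≤ u := div_nonneg ht hμ0.le
  have htu : t = μ * u := by rw [hudef]; field_simp
  have hle1 : r * u - shiftedN δ p a u ≤
      sSup {x : ℝ | ∃ t : ℝ, 0 ≤ t ∧ x = r * t - shiftedN δ p a t} :=
    le_csSup hS ⟨u, hu, rfl⟩
  have hkey : h ^ m * shiftedN δ p a u ≤ shiftedN δ p a t := by
    rw [shiftedN_eq δ p a t hδ ha ht, shiftedN_eq δ p a u hδ ha hu, htu, ← hμq]
    exact key_scaling (δ + a) p μ u hb hp hμ0 hμ1 hu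
  have hhh : h * μ = h ^ m := by
    have h2 := Real.rpow_add hh0 1 (m - 1)
    rw [Real.rpow_one] at h2
    rw [hμdef, ← h2]
    congr 1; ring
  have harith : h * r * t = h ^ m * (r * u) := by
    rw [htu, ← hhh]; ring
  calc h * r * t - shiftedN δ p a t
      ≤ h ^ m * (r * u) - h ^ m * shiftedN δ p a u := by rw [harith]; linarith
    _ = h ^ m * (r * u - shiftedN δ p a u) := by ring
    _ ≤ h ^ m * sSup {x : ℝ | ∃ t : ℝ, 0 ≤ t ∧ x = r * t - shiftedN δ p a t} :=
        mul_le_mul_of_nonneg_left hle1 hhm.le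
end
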